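/- Let H be a bialgebra over k, let C be a left H-module (a k-vector space with a left H-action), and let M be a left H-comodule with coaction m ↦ Σ m₍₋₁₎⊗m₍₀₎ ∈ H⊗M. For n ≥ 0 define the k-linear operator τ_n on C^{⊗(n+1)}⊗M by τ_n(c⁰⊗c¹⊗⋯⊗cⁿ⊗m) = c¹⊗⋯⊗cⁿ⊗(m₍₋₁₎•c⁰)⊗m₍₀₎. Then the (n+1)-fold iterate of τ_n is given by the coaction twist: τ_n^{n+1}(c⁰⊗⋯⊗cⁿ⊗m) = Σ (m₍₋₁₎•(c⁰⊗⋯⊗cⁿ))⊗m₍₀₎, where H acts diagonally on C^{⊗(n+1)} via iterated comultiplication, h•(c⁰⊗⋯⊗cⁿ) = Σ (h₍₁₎•c⁰)⊗⋯⊗(h₍ₙ₊₁₎•cⁿ). In particular, if M is in addition a left H-module which is stable (Σ m₍₋₁₎•m₍₀₎ = m for all m ∈ M), the failure of τ_n^{n+1} to be the identity is measured exactly by the diagonal H-action twisted by the coaction of M. -/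

import Mathlib

/-!
STATEMENT 10: Let `H` be a bialgebra over `k`, `C` a left `H`-module, and `M` a left
`H`-comodule with coaction `m ↦ Σ m₍₋₁₎⊗m₍₀₎`.  For `n ≥ 0` define the operator `τ_n` on
`C^{⊗(n+1)}⊗M` by `τ_n(c⁰⊗⋯⊗cⁿ⊗m) = Σ c¹⊗⋯⊗cⁿ⊗(m₍₋₁₎•c⁰)⊗m₍₀₎`.  Then
`τ_n^{n+1}(c⁰⊗⋯⊗cⁿ⊗m) = Σ (m₍₋₁₎•(c⁰⊗⋯⊗cⁿ))⊗m₍₀₎`, where `H` acts diagonally on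
`C^{⊗(n+1)}` via the iterated comultiplication.

Here `C^{⊗(n+1)}` is modelled as the nested tensor power `TP k C n = C ⊗ (C ⊗ (⋯ ⊗ C))`,
and both `τ_n` and the coaction-twisted diagonal action are expressed as compositions of
linear maps (which is exactly the Sweedler-notation formula, universally quantified).
-/

open TensorProduct

noncomputable section

universe u v w

variable (k : Type u) [Field k]

/-- A bundled `k`-module. -/
structure ModBundle where
  carrier : Type v
  [instAdd : AddCommGroup carrier]
  [instMod : Module k carrier]

attribute [instance] ModBundle.instAdd ModBundle.instMod

variable (C : Type v) [AddCommGroup C] [Module k C]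

/-- The bundled iterated tensor power `C^{⊗(n+1)}`. -/
def TPB : ℕ → ModBundle k
  | 0 => ⟨C⟩
  | n + 1 => ⟨C ⊗[k] (TPB n).carrier⟩

/-- `TP k C n = C^{⊗(n+1)}`, nested as `C ⊗ (C ⊗ (⋯ ⊗ C))`. -/
def TP (n : ℕ) : Type v := (TPB k C n).carrier

instance (n : ℕ) : AddCommGroup (TP k C n) := (TPB k C n).instAdd
instance (n : ℕ) : Module k (TP k C n) := (TPB k C n).instMod

variable (H : Type w) [Semiring H] [Bialgebra k H]
  [Module H C] [IsScalarTower k H C] [SMulCommClass k H C]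

/-- The action of `H` on `C` as a `k`-bilinear map. -/
def actBil : H →ₗ[k] C →ₗ[k] C :=
  LinearMap.mk₂ k (fun h c => h • c)
    (fun h h' c => add_smul h h' c)
    (fun a h c => smul_assoc a h c)
    (fun h c c' => smul_add h c c')
    (fun a h c => (smul_comm a h c).symm)

/-- The action of `H` on `C` as a linear map `H ⊗ C → C`. -/
def act : H ⊗[k] C →ₗ[k] C := TensorProduct.lift (actBil k C H)

/-- The diagonal action of `H` on `C^{⊗(n+1)}` via iterated comultiplication:
`h ⊗ (c⁰⊗⋯⊗cⁿ) ↦ Σ (h₍₁₎•c⁰)⊗⋯⊗(h₍ₙ₊₁₎•cⁿ)`. -/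
def diagAct : (n : ℕ) → H ⊗[k] TP k C n →ₗ[k] TP k C n
  | 0 => act k C H
  | n + 1 =>
    (TensorProduct.map (act k C H) (diagAct n) ∘ₗ
      (TensorProduct.tensorTensorTensorComm k H H C (TP k C n)).toLinearMap ∘ₗ
      TensorProduct.map Coalgebra.comul LinearMap.id :
        H ⊗[k] (C ⊗[k] TP k C n) →ₗ[k] C ⊗[k] TP k C n)

/-- Appending a tensor factor at the end: `(c⁰⊗⋯⊗cⁿ) ⊗ d ↦ c⁰⊗⋯⊗cⁿ⊗d`. -/
def app : (n : ℕ) → TP k C n ⊗[k] C →ₗ[k] TP k C (n + 1)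
  | 0 => (LinearMap.id : C ⊗[k] C →ₗ[k] C ⊗[k] C)
  | n + 1 =>
    (TensorProduct.map LinearMap.id (app n) ∘ₗ
      (TensorProduct.assoc k C (TP k C n) C).toLinearMap :
        (C ⊗[k] TP k C n) ⊗[k] C →ₗ[k] C ⊗[k] TP k C (n + 1))

/-- The twisted cyclic rotation `h ⊗ (c⁰⊗⋯⊗cⁿ) ↦ c¹⊗⋯⊗cⁿ⊗(h•c⁰)`. -/
def rot : (n : ℕ) → H ⊗[k] TP k C n →ₗ[k] TP k C n
  | 0 => act k C H
  | n + 1 =>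
    (app k C n ∘ₗ
      TensorProduct.map LinearMap.id (act k C H) ∘ₗ
      (TensorProduct.comm k (H ⊗[k] C) (TP k C n)).toLinearMap ∘ₗ
      (TensorProduct.assoc k H C (TP k C n)).symm.toLinearMap :
        H ⊗[k] (C ⊗[k] TP k C n) →ₗ[k] C ⊗[k] TP k C n)

variable (M : Type v) [AddCommGroup M] [Module k M] (ρ : M →ₗ[k] H ⊗[k] M)

/-- Twist `C^{⊗(n+1)} ⊗ M → C^{⊗(n+1)} ⊗ M` along the coaction `ρ` of `M` by an operator
`g : H ⊗ C^{⊗(n+1)} → C^{⊗(n+1)}`: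
`(c⁰⊗⋯⊗cⁿ) ⊗ m ↦ Σ g(m₍₋₁₎ ⊗ (c⁰⊗⋯⊗cⁿ)) ⊗ m₍₀₎`. -/
def coactTwist (n : ℕ) (g : H ⊗[k] TP k C n →ₗ[k] TP k C n) :
    TP k C n ⊗[k] M →ₗ[k] TP k C n ⊗[k] M :=
  TensorProduct.map g LinearMap.id ∘ₗ
    TensorProduct.map (TensorProduct.comm k (TP k C n) H).toLinearMap LinearMap.id ∘ₗ
    (TensorProduct.assoc k (TP k C n) H M).symm.toLinearMap ∘ₗ
    TensorProduct.map LinearMap.id ρ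

/-- The cyclic operator `τ_n(c⁰⊗⋯⊗cⁿ⊗m) = Σ c¹⊗⋯⊗cⁿ⊗(m₍₋₁₎•c⁰)⊗m₍₀₎`. -/
def tau (n : ℕ) : TP k C n ⊗[k] M →ₗ[k] TP k C n ⊗[k] M :=
  coactTwist k C H M ρ n (rot k C H n)

/-!
Twisting by the coaction turns the convolution `(F ⋆ G)(h ⊗ x) = Σ F(h₍₂₎ ⊗ G(h₍₁₎ ⊗ x))` of
operators `H ⊗ X → X` into composition; this is exactly coassociativity of `ρ`. Hence
`τ_n^{n+1}` is the twist of the `(n+1)`-fold convolution power of the rotation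
`h ⊗ (c⁰⊗⋯⊗cⁿ) ↦ c¹⊗⋯⊗cⁿ⊗(h•c⁰)`. A factor inserted in front of position `p + 1` is carried
by one rotation to position `p`, so after `n + 1` convolved rotations every factor `cⁱ` is
back in place, acted on by `h₍ᵢ₊₁₎`: this is the diagonal action.
-/

section Twist

variable {R A X : Type*} [CommSemiring R] [AddCommMonoid A] [Module R A]
  [AddCommMonoid X] [Module R X]

def twistBy (F : A ⊗[R] X →ₗ[R] X) (N : Type*) [AddCommMonoid N] [Module R N] :
    X ⊗[R] (A ⊗[R] N) →ₗ[R] X ⊗[R] N :=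
  F.rTensor N ∘ₗ (TensorProduct.comm R X A).toLinearMap.rTensor N ∘ₗ
    (TensorProduct.assoc R X A N).symm.toLinearMap

variable {N N' : Type*} [AddCommMonoid N] [Module R N] [AddCommMonoid N'] [Module R N']

@[simp]
lemma twistBy_tmul (F : A ⊗[R] X →ₗ[R] X) (x : X) (a : A) (n : N) :
    twistBy F N (x ⊗ₜ (a ⊗ₜ n)) = F (a ⊗ₜ x) ⊗ₜ n := by
  simp [twistBy]

lemma lTensor_lTensor_comp_twistBy (F : A ⊗[R] X →ₗ[R] X) (f : N →ₗ[R] N') :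
    f.lTensor X ∘ₗ twistBy F N = twistBy F N' ∘ₗ (f.lTensor A).lTensor X := by
  ext x a n
  simp

variable [CoalgebraStruct R A]

open Coalgebra

def actConv (F G : A ⊗[R] X →ₗ[R] X) : A ⊗[R] X →ₗ[R] X :=
  F ∘ₗ G.lTensor A ∘ₗ (TensorProduct.assoc R A A X).toLinearMap ∘ₗ
    ((TensorProduct.comm R A A).toLinearMap ∘ₗ comul).rTensor X

lemma actConv_tmul {ι : Type*} (F G : A ⊗[R] X →ₗ[R] X) (a : A) (𝓡 : Repr R a ι) (x : X) :
    actConv F G (a ⊗ₜ x) = ∑ i ∈ 𝓡.index, F (𝓡.right i ⊗ₜ G (𝓡.left i ⊗ₜ x)) := by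
  simp [actConv, ← 𝓡.eq, sum_tmul]

lemma actConv_comp_lTensor {Y : Type*} [AddCommMonoid Y] [Module R Y]
    {F G : A ⊗[R] X →ₗ[R] X} {F' G' : A ⊗[R] Y →ₗ[R] Y} {φ ψ χ : X →ₗ[R] Y}
    (hF : F' ∘ₗ φ.lTensor A = ψ ∘ₗ F) (hG : G' ∘ₗ χ.lTensor A = φ ∘ₗ G) :
    actConv F' G' ∘ₗ χ.lTensor A = ψ ∘ₗ actConv F G := by
  ext a x
  have hF' (b : A) (y : X) : F' (b ⊗ₜ φ y) = ψ (F (b ⊗ₜ y)) := by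
    simpa using LinearMap.congr_fun hF (b ⊗ₜ y)
  have hG' (b : A) : G' (b ⊗ₜ χ x) = φ (G (b ⊗ₜ x)) := by
    simpa using LinearMap.congr_fun hG (b ⊗ₜ x)
  simp [actConv_tmul _ _ a (ℛ R a), hF', hG']

lemma twistBy_comp_twistBy (F G : A ⊗[R] X →ₗ[R] X) :
    twistBy F N ∘ₗ twistBy G (A ⊗[R] N) ∘ₗ
        ((TensorProduct.assoc R A A N).toLinearMap ∘ₗ comul.rTensor N).lTensor X
      = twistBy (actConv F G) N := by
  ext x a n
  simp [actConv_tmul F G a (ℛ R a), ← (ℛ R a).eq, sum_tmul, tmul_sum]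

def convPow (F : A ⊗[R] X →ₗ[R] X) : ℕ → A ⊗[R] X →ₗ[R] X
  | 0 => F
  | m + 1 => actConv (convPow F m) F

variable {M : Type*} [AddCommMonoid M] [Module R M]

def coactTwistBy (ρ : M →ₗ[R] A ⊗[R] M) (F : A ⊗[R] X →ₗ[R] X) : X ⊗[R] M →ₗ[R] X ⊗[R] M :=
  twistBy F M ∘ₗ ρ.lTensor X

variable {ρ : M →ₗ[R] A ⊗[R] M}

lemma coactTwistBy_comp (hρ : (TensorProduct.assoc R A A M).toLinearMap ∘ₗ comul.rTensor M ∘ₗ ρ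
      = ρ.lTensor A ∘ₗ ρ) (F G : A ⊗[R] X →ₗ[R] X) :
    coactTwistBy ρ F ∘ₗ coactTwistBy ρ G = coactTwistBy ρ (actConv F G) :=
  calc _ = twistBy F M ∘ₗ (ρ.lTensor X ∘ₗ twistBy G M) ∘ₗ ρ.lTensor X := rfl
    _ = twistBy F M ∘ₗ twistBy G (A ⊗[R] M) ∘ₗ (ρ.lTensor A ∘ₗ ρ).lTensor X := by
      rw [lTensor_lTensor_comp_twistBy, LinearMap.lTensor_comp]; rfl
    _ = twistBy F M ∘ₗ twistBy G (A ⊗[R] M) ∘ₗ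
          ((TensorProduct.assoc R A A M).toLinearMap ∘ₗ comul.rTensor M ∘ₗ ρ).lTensor X := by
      rw [hρ]
    _ = coactTwistBy ρ (actConv F G) := by
      rw [coactTwistBy, ← twistBy_comp_twistBy, ← LinearMap.comp_assoc _ (comul.rTensor M),
        LinearMap.lTensor_comp]; rfl

lemma coactTwistBy_pow (hρ : (TensorProduct.assoc R A A M).toLinearMap ∘ₗ comul.rTensor M ∘ₗ ρ
      = ρ.lTensor A ∘ₗ ρ) (F : A ⊗[R] X →ₗ[R] X) (m : ℕ) :
    coactTwistBy ρ F ^ (m + 1) = coactTwistBy ρ (convPow F m) := by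
  induction m with
  | zero => exact pow_one _
  | succ m ih => rw [pow_succ, ih, Module.End.mul_eq_comp, coactTwistBy_comp hρ]; rfl

end Twist

section Rotation

open Coalgebra

@[elab_as_elim]
lemma TP.induction_on_succ {n : ℕ} {motive : TP k C (n + 1) → Prop} (x : TP k C (n + 1))
    (zero : motive 0) (tmul : ∀ (c : C) (t : TP k C n), motive (c ⊗ₜ[k] t : C ⊗[k] TP k C n))
    (add : ∀ x y, motive x → motive y → motive (x + y)) : motive x :=
  TensorProduct.induction_on x zero tmul add

/-- Inserts `d` in front of the factor `cᵖ` of `c⁰⊗⋯⊗cⁿ`, or at the end if `p > n`. -/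
def insertAt (d : C) : (n p : ℕ) → TP k C n →ₗ[k] TP k C (n + 1)
  | n, 0 => (TensorProduct.mk k C (TP k C n) d : TP k C n →ₗ[k] C ⊗[k] TP k C n)
  | 0, _ + 1 => ((TensorProduct.mk k C C).flip d : C →ₗ[k] C ⊗[k] C)
  | n + 1, p + 1 =>
    ((insertAt d n p).lTensor C : C ⊗[k] TP k C n →ₗ[k] C ⊗[k] TP k C (n + 1))

lemma insertAt_zero_apply (d : C) (n : ℕ) (t : TP k C n) :
    insertAt k C d n 0 t = (d ⊗ₜ[k] t : C ⊗[k] TP k C n) := by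
  cases n <;> rfl

lemma insertAt_succ_tmul (d : C) (n p : ℕ) (c : C) (t : TP k C n) :
    insertAt k C d (n + 1) (p + 1) (c ⊗ₜ[k] t : C ⊗[k] TP k C n)
      = (c ⊗ₜ[k] insertAt k C d n p t : C ⊗[k] TP k C (n + 1)) :=
  rfl

lemma app_tmul (n : ℕ) (c : C) (t : TP k C n) (d : C) :
    app k C (n + 1) ((c ⊗ₜ[k] t : C ⊗[k] TP k C n) ⊗ₜ[k] d)
      = (c ⊗ₜ[k] app k C n (t ⊗ₜ[k] d) : C ⊗[k] TP k C (n + 1)) :=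
  rfl

lemma app_tmul_eq_insertAt (n : ℕ) (t : TP k C n) (d : C) :
    app k C n (t ⊗ₜ[k] d) = insertAt k C d n (n + 1) t := by
  induction n with
  | zero => rfl
  | succ n ih =>
    induction t using TP.induction_on_succ with
    | zero => simp
    | tmul c t => rw [app_tmul, ih, insertAt_succ_tmul]
    | add x y hx hy => simp only [add_tmul, map_add, hx, hy]

lemma app_insertAt_tmul (d e : C) (n j : ℕ) (hj : j ≤ n + 1) (t : TP k C n) :
    app k C (n + 1) (insertAt k C d n j t ⊗ₜ[k] e)
      = insertAt k C d (n + 1) j (app k C n (t ⊗ₜ[k] e)) := by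
  induction n generalizing j with
  | zero =>
    rcases j with _ | j
    · rfl
    · obtain rfl : j = 0 := by omega
      rfl
  | succ n ih =>
    rcases j with _ | j
    · rw [insertAt_zero_apply, insertAt_zero_apply]; rfl
    · induction t using TP.induction_on_succ with
      | zero => simp
      | tmul c t =>
        rw [insertAt_succ_tmul, app_tmul, ih j (by omega), app_tmul, insertAt_succ_tmul]
      | add x y hx hy => simp only [add_tmul, map_add, hx, hy]

lemma rot_succ_tmul (n : ℕ) (h : H) (c : C) (t : TP k C n) :
    rot k C H (n + 1) (h ⊗ₜ[k] (c ⊗ₜ[k] t : C ⊗[k] TP k C n)) = app k C n (t ⊗ₜ[k] (h • c)) :=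
  rfl

lemma rot_comp_lTensor_insertAt (d : C) (n q : ℕ) (hq : q ≤ n) :
    rot k C H (n + 1) ∘ₗ (insertAt k C d n (q + 1)).lTensor H
      = insertAt k C d n q ∘ₗ rot k C H n := by
  ext h t
  simp only [TensorProduct.AlgebraTensorModule.curry_apply, LinearMap.coe_restrictScalars,
    TensorProduct.curry_apply, LinearMap.comp_apply, LinearMap.lTensor_tmul]
  cases n with
  | zero =>
    obtain rfl : q = 0 := by omega
    rfl
  | succ n =>
    induction t using TP.induction_on_succ with
    | zero => simp
    | tmul c t =>
      rw [insertAt_succ_tmul, rot_succ_tmul, app_insertAt_tmul k C d _ n q hq, rot_succ_tmul]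
    | add x y hx hy => simp only [tmul_add, map_add, hx, hy]


lemma convPow_rot_comp_lTensor_insertAt (d : C) (n m q : ℕ) (hqm : q + m ≤ n) :
    convPow (rot k C H (n + 1)) m ∘ₗ (insertAt k C d n (q + m + 1)).lTensor H
      = insertAt k C d n q ∘ₗ convPow (rot k C H n) m := by
  induction m generalizing q with
  | zero => exact rot_comp_lTensor_insertAt k C H d n q hqm
  | succ m ih =>
    exact actConv_comp_lTensor (ih q (by omega))
      (rot_comp_lTensor_insertAt k C H d n (q + m + 1) (by omega))

lemma convPow_rot_tmul_app (n : ℕ) (h : H) (t : TP k C n) (d : C) :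
    convPow (rot k C H (n + 1)) n (h ⊗ₜ[k] app k C n (t ⊗ₜ[k] d))
      = (d ⊗ₜ[k] convPow (rot k C H n) n (h ⊗ₜ[k] t) : C ⊗[k] TP k C n) := by
  have := LinearMap.congr_fun (convPow_rot_comp_lTensor_insertAt k C H d n n 0 (by omega))
    (h ⊗ₜ[k] t)
  rw [LinearMap.comp_apply, LinearMap.lTensor_tmul, zero_add, ← app_tmul_eq_insertAt] at this
  rw [this, LinearMap.comp_apply, insertAt_zero_apply]

lemma diagAct_succ_tmul {ι : Type*} (n : ℕ) (h : H) (𝓡 : Repr k h ι) (c : C)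
    (t : TP k C n) :
    diagAct k C H (n + 1) (h ⊗ₜ[k] (c ⊗ₜ[k] t : C ⊗[k] TP k C n))
      = ∑ i ∈ 𝓡.index, ((𝓡.left i • c) ⊗ₜ[k] diagAct k C H n (𝓡.right i ⊗ₜ[k] t) :
          C ⊗[k] TP k C n) := by
  change TensorProduct.map (act k C H) (diagAct k C H n)
    (TensorProduct.tensorTensorTensorComm k H H C (TP k C n) (comul h ⊗ₜ[k] (c ⊗ₜ[k] t))) = _
  simp [← 𝓡.eq, sum_tmul, act, actBil]

lemma convPow_rot_self (n : ℕ) : convPow (rot k C H n) n = diagAct k C H n := by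
  induction n with
  | zero => rfl
  | succ n ih =>
    ext h t
    simp only [TensorProduct.AlgebraTensorModule.curry_apply, LinearMap.coe_restrictScalars,
      TensorProduct.curry_apply]
    induction t using TP.induction_on_succ with
    | zero => simp
    | tmul c t =>
      erw [actConv_tmul _ _ h (ℛ k h), diagAct_succ_tmul k C H n h (ℛ k h)]
      refine Finset.sum_congr rfl fun i _ => ?_
      rw [rot_succ_tmul, convPow_rot_tmul_app, ih]
    | add x y hx hy => simp only [tmul_add, map_add, hx, hy]

end Rotation

theorem tau_pow_succ_eq_coaction_twist
    (hcoassoc : (TensorProduct.assoc k H H M).toLinearMap ∘ₗ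
        TensorProduct.map Coalgebra.comul LinearMap.id ∘ₗ ρ
      = TensorProduct.map LinearMap.id ρ ∘ₗ ρ) :
    ∀ n : ℕ,
      (tau k C H M ρ n) ^ (n + 1) = coactTwist k C H M ρ n (diagAct k C H n) := by
  intro n
  rw [← convPow_rot_self]
  exact coactTwistBy_pow hcoassoc (rot k C H n) n

end
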